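/- Let G be a finitely generated branch group acting on a spherically homogeneous rooted tree T. Then G is infinite and every proper quotient of G belongs to 𝓜𝓕; consequently, G admits a maximal subgroup of infinite index if and only if it admits a proper prodense subgroup. -/

import Mathlib

open Equiv

namespace PaperDefs


/-! ### Spherically homogeneous rooted trees -/

variable (A : ℕ → Type)

/-- Vertices of the spherically homogeneous rooted tree determined by the
sequence of alphabets `A`: words `a₁a₂⋯aₙ` with `aᵢ ∈ A i`. -/
def Vertex : Type := Σ n : ℕ, ∀ i : Fin n, A i

/-- The prefix relation on vertices. -/
def IsPref (v w : Vertex A) : Prop :=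
  ∃ h : v.1 ≤ w.1, ∀ i : Fin v.1, v.2 i = w.2 (Fin.castLE h i)

/-- The automorphism group of the tree: permutations of the vertex set that
preserve the prefix relation. -/
def treeAut : Subgroup (Perm (Vertex A)) where
  carrier := {g | ∀ v w, IsPref A v w ↔ IsPref A (g v) (g w)}
  one_mem' := by intro v w; simp
  mul_mem' := by
    intro a b ha hb v w
    simpa [Equiv.Perm.mul_apply] using (hb v w).trans (ha (b v) (b w))
  inv_mem' := by
    intro a ha v w
    simpa using (ha (a⁻¹ v) (a⁻¹ w)).symm

/-- The stabiliser of the vertex `v` in `G`. -/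
def stG (G : Subgroup (Perm (Vertex A))) (v : Vertex A) : Subgroup (Perm (Vertex A)) :=
  G ⊓ MulAction.stabilizer (Perm (Vertex A)) v

/-- The rigid stabiliser of the vertex `v` in `G`: elements of `G` fixing every
vertex that does not have `v` as a prefix. -/
def rist (G : Subgroup (Perm (Vertex A))) (v : Vertex A) : Subgroup (Perm (Vertex A)) where
  carrier := {g | g ∈ G ∧ ∀ w, ¬ IsPref A v w → g w = w}
  one_mem' := ⟨G.one_mem, fun w _ => by simp⟩
  mul_mem' := by
    rintro a b ⟨haG, ha⟩ ⟨hbG, hb⟩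
    refine ⟨G.mul_mem haG hbG, fun w hw => ?_⟩
    simp [Equiv.Perm.mul_apply, hb w hw, ha w hw]
  inv_mem' := by
    rintro a ⟨haG, ha⟩
    refine ⟨G.inv_mem haG, fun w hw => ?_⟩
    conv_lhs => rw [← ha w hw]
    simp

/-- The rigid stabiliser of the `n`-th level: the subgroup generated by the rigid
stabilisers of the vertices of level `n`. -/
def ristLevel (G : Subgroup (Perm (Vertex A))) (n : ℕ) : Subgroup (Perm (Vertex A)) :=
  ⨆ (v : Vertex A) (_ : v.1 = n), rist A G v

/-- `G` acts spherically transitively: transitively on every level. -/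
def SphTrans (G : Subgroup (Perm (Vertex A))) : Prop :=
  ∀ v w : Vertex A, v.1 = w.1 → ∃ g ∈ G, g v = w

/-- `G ≤ Aut T` is a weakly branch group. -/
def IsWeaklyBranch (G : Subgroup (Perm (Vertex A))) : Prop :=
  G ≤ treeAut A ∧ SphTrans A G ∧ ∀ v : Vertex A, rist A G v ≠ ⊥

/-- `G ≤ Aut T` is a branch group. -/
def IsBranch (G : Subgroup (Perm (Vertex A))) : Prop :=
  IsWeaklyBranch A G ∧ ∀ n : ℕ, (ristLevel A G n).relIndex G ≠ 0

/-! ### Boundary of the tree -/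

/-- The boundary of the tree: infinite words. -/
def Boundary : Type := ∀ i : ℕ, A i

/-- The length-`n` prefix of a boundary point. -/
def bdryPrefix (ξ : Boundary A) (n : ℕ) : Vertex A := ⟨n, fun i => ξ i⟩

/-- The support of a subgroup `H` on the boundary: boundary points moved by some
element of `H` (a boundary point is moved by a tree automorphism iff one of its
finite prefixes is moved). -/
def supp (H : Subgroup (Perm (Vertex A))) : Set (Boundary A) :=
  {ξ | ∃ h ∈ H, ∃ n : ℕ, h (bdryPrefix A ξ n) ≠ bdryPrefix A ξ n}

/-! ### Sections / projections -/

/-- The shifted alphabet sequence, describing the subtree rooted at a vertex of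
level `n`. -/
def shift (n : ℕ) : ℕ → Type := fun i => A (i + n)

/-- Concatenation of a vertex `v` of level `n` with a vertex of the subtree `T_v`
(viewed in the shifted tree). -/
def concat (n : ℕ) (v : Vertex A) (hv : v.1 = n) (w : Vertex (shift A n)) : Vertex A :=
  ⟨n + w.1, fun i =>
    if h : (i : ℕ) < n then v.2 ⟨(i : ℕ), by omega⟩
    else cast (congrArg A (by have := i.isLt; omega : (i : ℕ) - n + n = (i : ℕ)))
      (w.2 ⟨(i : ℕ) - n, by have := i.isLt; omega⟩)⟩

/-- `projStab A G n v hv` is `G_v = φ_v(St_G(v))`, the image under the projection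
`φ_v` of the stabiliser of `v` in `G`, realised as a subgroup of the automorphisms
of the subtree `T_v` (identified with the tree on the shifted alphabet sequence):
it consists of those `σ` for which some `g ∈ G` stabilises `v` and satisfies
`g (v·w) = v·(σ w)` for every vertex `w` of the subtree. -/
def projStab (G : Subgroup (Perm (Vertex A))) (n : ℕ) (v : Vertex A) (hv : v.1 = n) :
    Subgroup (Perm (Vertex (shift A n))) where
  carrier := {σ | ∃ g ∈ G, g v = v ∧ ∀ w, g (concat A n v hv w) = concat A n v hv (σ w)}
  one_mem' := ⟨1, G.one_mem, by simp, fun w => by simp⟩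
  mul_mem' := by
    rintro σ τ ⟨g, hgG, hgv, hg⟩ ⟨g', hg'G, hg'v, hg'⟩
    refine ⟨g * g', G.mul_mem hgG hg'G, by simp [Equiv.Perm.mul_apply, hg'v, hgv], fun w => ?_⟩
    simp [Equiv.Perm.mul_apply, hg' w, hg (τ w)]
  inv_mem' := by
    rintro σ ⟨g, hgG, hgv, hg⟩
    refine ⟨g⁻¹, G.inv_mem hgG, by simpa using (congrArg (⇑g⁻¹) hgv).symm, fun w => ?_⟩
    have h1 : g (concat A n v hv (σ⁻¹ w)) = concat A n v hv w := by
      rw [hg (σ⁻¹ w)]; simp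
    calc g⁻¹ (concat A n v hv w) = g⁻¹ (g (concat A n v hv (σ⁻¹ w))) := by rw [h1]
      _ = concat A n v hv (σ⁻¹ w) := by simp

/-! ### Group-theoretic notions -/

/-- `H` is a normal subgroup of `K` (both being subgroups of an ambient group). -/
def NormalIn {P : Type*} [Group P] (H K : Subgroup P) : Prop :=
  H ≤ K ∧ ∀ k ∈ K, ∀ h ∈ H, k * h * k⁻¹ ∈ H

/-- `H` is `k`-subnormal in `G`: there is a chain `H = c k ⊴ ⋯ ⊴ c 0 = G`. -/
def SubnormalIn {P : Type*} [Group P] (H G : Subgroup P) (k : ℕ) : Prop :=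
  ∃ c : ℕ → Subgroup P, c 0 = G ∧ c k = H ∧ ∀ i < k, NormalIn (c (i + 1)) (c i)

/-- The iterated derived subgroup `H⁽ᵏ⁾` of a subgroup `H` of an ambient group. -/
def derivedIter {P : Type*} [Group P] (H : Subgroup P) : ℕ → Subgroup P
  | 0 => H
  | k + 1 => ⁅derivedIter H k, derivedIter H k⁆

/-- The class `𝓜𝓕` of groups all of whose maximal subgroups have finite index. -/
def MF (Γ : Type*) [Group Γ] : Prop :=
  ∀ M : Subgroup Γ, IsCoatom M → M.index ≠ 0

/-- Every proper quotient of `Γ` belongs to `𝓜𝓕`. -/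
def QuotientsMF (Γ : Type*) [Group Γ] : Prop :=
  ∀ (N : Subgroup Γ) [N.Normal], N ≠ ⊥ → MF (Γ ⧸ N)

/-- `H` is a prodense subgroup of `Γ`: `HN = Γ` for every nontrivial normal `N ⊴ Γ`. -/
def Prodense {Γ : Type*} [Group Γ] (H : Subgroup Γ) : Prop :=
  ∀ N : Subgroup Γ, N.Normal → N ≠ ⊥ → H ⊔ N = ⊤

/-- `H` is a prodense subgroup of `G`, both being subgroups of an ambient group:
`H ≤ G` and `HN = G` for every nontrivial subgroup `N ≤ G` normal in `G`. -/
def ProdenseIn {P : Type*} [Group P] (H G : Subgroup P) : Prop :=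
  H ≤ G ∧ ∀ N : Subgroup P, N ≤ G → NormalIn N G → N ≠ ⊥ → H ⊔ N = G

/-- `M` is a maximal subgroup of `G` (both subgroups of an ambient group). -/
def MaximalIn {P : Type*} [Group P] (M G : Subgroup P) : Prop :=
  M < G ∧ ∀ K : Subgroup P, M < K → K ≤ G → K = G


section GroupLemmas

open Pointwise

variable {Γ : Type*} [Group Γ]

lemma exists_coatom_of_fg (hfg : Group.FG Γ) {H : Subgroup Γ} (hH : H ≠ ⊤) :
    ∃ M : Subgroup Γ, IsCoatom M ∧ H ≤ M := by
  obtain ⟨S, hScl, hSfin⟩ := Group.fg_iff.mp hfg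
  have key : ∀ c ⊆ {K : Subgroup Γ | K ≠ ⊤}, IsChain (· ≤ ·) c → ∀ y ∈ c,
      ∃ ub ∈ {K : Subgroup Γ | K ≠ ⊤}, ∀ z ∈ c, z ≤ ub := by
    intro c hcs hchain y hy
    haveI : Nonempty c := ⟨⟨y, hy⟩⟩
    have hdir : Directed (· ≤ ·) (fun K : c => (K : Subgroup Γ)) := by
      intro a b
      rcases hchain.total a.2 b.2 with h | h
      · exact ⟨b, h, le_rfl⟩
      · exact ⟨a, le_rfl, h⟩
    refine ⟨⨆ K : c, (K : Subgroup Γ), ?_,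
      fun z hz => le_iSup (fun K : c => (K : Subgroup Γ)) ⟨z, hz⟩⟩
    intro htop
    have hsub : S ⊆ ⋃ K : c, ((K : Subgroup Γ) : Set Γ) := by
      intro s _
      have : s ∈ (⨆ K : c, (K : Subgroup Γ) : Subgroup Γ) := htop ▸ Subgroup.mem_top s
      rw [← SetLike.mem_coe, Subgroup.coe_iSup_of_directed hdir] at this
      exact this
    have hdir' : Directed (· ⊆ ·) (fun K : c => ((K : Subgroup Γ) : Set Γ)) := by
      intro a b
      obtain ⟨k, h1, h2⟩ := hdir a b
      exact ⟨k, h1, h2⟩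
    obtain ⟨K, hK⟩ := hdir'.exists_mem_subset_of_finset_subset_biUnion
      (s := hSfin.toFinset) (by rwa [Set.Finite.coe_toFinset])
    have : (⊤ : Subgroup Γ) ≤ (K : Subgroup Γ) := by
      rw [← hScl]
      exact (Subgroup.closure_le _).mpr (by rwa [Set.Finite.coe_toFinset] at hK)
    exact hcs K.2 (top_unique this)
  obtain ⟨M, hHM, hMs⟩ := zorn_le_nonempty₀ {K : Subgroup Γ | K ≠ ⊤} key H hH
  refine ⟨M, ⟨hMs.prop, fun K hMK => ?_⟩, hHM⟩
  by_contra hK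
  exact hMK.ne (le_antisymm hMK.le (hMs.le_of_ge hK hMK.le))

lemma finite_of_fg_comm_aux {H : Type*} [CommGroup H] (hfg : Group.FG H)
    (h : (∀ x : H, x * x = 1) ∨ (∀ x : H, ∃ y : H, y * y = x)) : Finite H := by
  haveI : AddGroup.FG (Additive H) := GroupFG.iff_add_fg.mp hfg
  obtain ⟨n, ι, fι, p, hp, e, ⟨eqv⟩⟩ :=
    AddCommGroup.equiv_free_prod_directSum_zmod (Additive H)
  rcases Nat.eq_zero_or_pos n with hn | hn
  · subst hn
    haveI : Subsingleton (Fin 0 →₀ ℤ) := ⟨fun a b => Finsupp.ext fun i => i.elim0⟩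
    haveI : ∀ i : ι, NeZero (p i ^ e i) := fun i => ⟨pow_ne_zero _ (hp i).ne_zero⟩
    haveI : Finite (DirectSum ι fun i => ZMod (p i ^ e i)) :=
      Finite.of_equiv _ DFinsupp.equivFunOnFintype.symm
    haveI : Finite (Additive H) := Finite.of_equiv _ eqv.toEquiv.symm
    exact Finite.of_equiv _ (Additive.ofMul (α := H)).symm
  · exfalso
    obtain ⟨i0⟩ : Nonempty (Fin n) := ⟨⟨0, hn⟩⟩
    rcases h with h | h
    · have hx : ∀ x : Additive H, x + x = 0 := fun x => h x
      have hkey := congrArg eqv (hx (eqv.symm (Finsupp.single i0 1, 0)))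
      rw [map_add, eqv.apply_symm_apply, map_zero] at hkey
      have h2 := congrArg (fun z : (Fin n →₀ ℤ) × DirectSum ι (fun i => ZMod (p i ^ e i)) => z.1 i0) hkey
      simp [Finsupp.single_eq_same] at h2
    · obtain ⟨y, hy⟩ := h (eqv.symm (Finsupp.single i0 1, 0)).toMul
      have hy' : Additive.ofMul y + Additive.ofMul y = eqv.symm (Finsupp.single i0 1, 0) := hy
      have hkey := congrArg eqv hy'
      rw [map_add, eqv.apply_symm_apply] at hkey
      have h2 := congrArg (fun z : (Fin n →₀ ℤ) × DirectSum ι (fun i => ZMod (p i ^ e i)) => z.1 i0) hkey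
      simp [Finsupp.single_eq_same] at h2
      omega

lemma subgroup_finite_helper {K : Subgroup Γ} (hfgK : Group.FG ↥K)
    (hc : ∀ x ∈ K, ∀ y ∈ K, x * y = y * x)
    (h : (∀ x ∈ K, x * x = 1) ∨ (∀ x ∈ K, ∃ y ∈ K, y * y = x)) : Finite ↥K := by
  letI cg : CommGroup ↥K :=
    { (inferInstance : Group ↥K) with
      mul_comm := fun a b => Subtype.ext (hc a a.2 b b.2) }
  refine finite_of_fg_comm_aux hfgK ?_
  rcases h with h | h
  · exact Or.inl fun x => Subtype.ext (h x x.2)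
  · refine Or.inr fun x => ?_
    obtain ⟨y, hyK, hy⟩ := h x x.2
    exact ⟨⟨y, hyK⟩, Subtype.ext hy⟩

lemma coatom_map_quotient (N : Subgroup Γ) [N.Normal] {M : Subgroup Γ}
    (hM : IsCoatom M) (hNM : N ≤ M) :
    IsCoatom (M.map (QuotientGroup.mk' N)) ∧
      (M.map (QuotientGroup.mk' N)).index = M.index := by
  have hker : (QuotientGroup.mk' N).ker = N := QuotientGroup.ker_mk' N
  have hsurj : Function.Surjective (QuotientGroup.mk' N) := QuotientGroup.mk'_surjective N
  have hcomap : (M.map (QuotientGroup.mk' N)).comap (QuotientGroup.mk' N) = M := by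
    rw [Subgroup.comap_map_eq, hker, sup_of_le_left hNM]
  constructor
  · constructor
    · intro htop
      apply hM.1
      rw [← hcomap, htop, Subgroup.comap_top]
    · intro K hK
      have h1 : M ≤ K.comap (QuotientGroup.mk' N) := by
        rw [← hcomap]; exact Subgroup.comap_mono hK.le
      have h2 : M ≠ K.comap (QuotientGroup.mk' N) := by
        intro hEq
        exact hK.ne (by rw [hEq, Subgroup.map_comap_eq_self_of_surjective hsurj])
      have h3 := hM.2 _ (lt_of_le_of_ne h1 h2)
      rw [← Subgroup.map_comap_eq_self_of_surjective hsurj K, h3]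
      rw [← Subgroup.comap_top (QuotientGroup.mk' N)]
      exact Subgroup.map_comap_eq_self_of_surjective hsurj ⊤
  · exact Subgroup.index_map_eq M hsurj (hker.le.trans hNM)

lemma MF_of_fg_virtually_abelian (hfg : Group.FG Γ)
    (A : Subgroup Γ) [hAn : A.Normal] (hA : ∀ x ∈ A, ∀ y ∈ A, x * y = y * x)
    (hAi : A.index ≠ 0) : MF Γ := by
  intro M hM
  by_cases hAM : A ≤ M
  · intro h0
    have hdvd : M.index ∣ A.index := Subgroup.index_dvd_of_le hAM
    rw [h0] at hdvd
    exact hAi (zero_dvd_iff.mp hdvd)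
  · have hsup : M ⊔ A = ⊤ := hM.2 _ (left_lt_sup.mpr hAM)
    haveI hBn : (M ⊓ A).Normal := by
      constructor
      intro x hx g
      have hg : g ∈ ((M : Set Γ) * (A : Set Γ)) := by
        rw [← Subgroup.mul_normal M A, hsup]; simp
      obtain ⟨m, hm, a, ha, rfl⟩ := hg
      have hax : a * x * a⁻¹ = x := by
        rw [hA a ha x hx.2, mul_assoc, mul_inv_cancel, mul_one]
      have hgx : (m * a) * x * (m * a)⁻¹ = m * x * m⁻¹ := by
        have h5 : (m * a) * x * (m * a)⁻¹ = m * (a * x * a⁻¹) * m⁻¹ := by group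
        rw [h5, hax]
      rw [hgx]
      exact ⟨M.mul_mem (M.mul_mem hm hx.1) (M.inv_mem hm), hAn.conj_mem x hx.2 m⟩
    have hker : (QuotientGroup.mk' (M ⊓ A)).ker = M ⊓ A := QuotientGroup.ker_mk' _
    have hsurj : Function.Surjective (QuotientGroup.mk' (M ⊓ A)) :=
      QuotientGroup.mk'_surjective _
    obtain ⟨hMco, hMidx⟩ := coatom_map_quotient (M ⊓ A) hM inf_le_left
    set Mb := M.map (QuotientGroup.mk' (M ⊓ A)) with hMbdef
    set Ab := A.map (QuotientGroup.mk' (M ⊓ A)) with hAbdef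
    haveI hAbn : Ab.Normal := Subgroup.Normal.map hAn _ hsurj
    have hAbcomm : ∀ x ∈ Ab, ∀ y ∈ Ab, x * y = y * x := by
      rintro _ ⟨a, ha, rfl⟩ _ ⟨b, hb, rfl⟩
      rw [← map_mul, ← map_mul, hA a ha b hb]
    have hinfbot : Mb ⊓ Ab = ⊥ := by
      rw [eq_bot_iff]
      rintro x ⟨hxM, hxA⟩
      obtain ⟨m, hm, rfl⟩ := hxM
      obtain ⟨a, ha, hma⟩ := hxA
      have hB : a⁻¹ * m ∈ M ⊓ A := by
        rw [← hker, MonoidHom.mem_ker, map_mul, map_inv, hma, inv_mul_cancel]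
      have hmA : m ∈ A := by
        have h6 : m = a * (a⁻¹ * m) := by group
        rw [h6]; exact A.mul_mem ha hB.2
      rw [Subgroup.mem_bot, ← MonoidHom.mem_ker, hker]
      exact ⟨hm, hmA⟩
    haveI : A.FiniteIndex := ⟨hAi⟩
    haveI : Group.FG ↥A := Subgroup.fg_of_index_ne_zero A
    have hAbfg : Group.FG ↥Ab :=
      Group.fg_of_surjective ((QuotientGroup.mk' (M ⊓ A)).subgroupMap_surjective A)
    set D : Subgroup (Γ ⧸ (M ⊓ A)) :=
      { carrier := {z | ∃ a ∈ Ab, a * a = z}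
        one_mem' := ⟨1, Ab.one_mem, one_mul 1⟩
        mul_mem' := by
          rintro _ _ ⟨a, ha, rfl⟩ ⟨b, hb, rfl⟩
          refine ⟨a * b, Ab.mul_mem ha hb, ?_⟩
          have hab := hAbcomm a ha b hb
          calc a * b * (a * b) = a * (b * a) * b := by group
            _ = a * (a * b) * b := by rw [← hab]
            _ = a * a * (b * b) := by group
        inv_mem' := by
          rintro _ ⟨a, ha, rfl⟩
          exact ⟨a⁻¹, Ab.inv_mem ha, by group⟩ } with hDdef
    have hDA : D ≤ Ab := by rintro _ ⟨a, ha, rfl⟩; exact Ab.mul_mem ha ha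
    haveI hDn : D.Normal := by
      constructor
      rintro _ ⟨a, ha, rfl⟩ g
      exact ⟨g * a * g⁻¹, hAbn.conj_mem a ha g, by group⟩
    have hAbfin : Finite ↥Ab := by
      by_cases hDM : D ≤ Mb
      · refine subgroup_finite_helper hAbfg hAbcomm (Or.inl fun x hx => ?_)
        have hxx : x * x ∈ Mb ⊓ Ab := ⟨hDM ⟨x, hx, rfl⟩, Ab.mul_mem hx hx⟩
        rw [hinfbot] at hxx
        exact Subgroup.mem_bot.mp hxx
      · have hsupD : Mb ⊔ D = ⊤ := hMco.2 _ (left_lt_sup.mpr hDM)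
        refine subgroup_finite_helper hAbfg hAbcomm (Or.inr fun x hx => ?_)
        have hxmem : x ∈ ((Mb : Set (Γ ⧸ (M ⊓ A))) * (D : Set (Γ ⧸ (M ⊓ A)))) := by
          rw [← Subgroup.mul_normal Mb D, hsupD]; simp
        obtain ⟨m, hm, d, hd, rfl⟩ := hxmem
        have hmmem : m ∈ Mb ⊓ Ab := by
          refine ⟨hm, ?_⟩
          have h7 : m = (m * d) * d⁻¹ := by group
          rw [h7]
          exact Ab.mul_mem hx (Ab.inv_mem (hDA hd))
        rw [hinfbot, Subgroup.mem_bot] at hmmem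
        obtain ⟨a, ha, ha2⟩ := hd
        exact ⟨a, ha, by rw [ha2, hmmem]; simp⟩
    intro h0
    have hsupb : Mb ⊔ Ab = ⊤ := by
      rw [← Subgroup.map_sup, hsup]
      exact Subgroup.map_top_of_surjective _ hsurj
    have hQfin : Finite ((Γ ⧸ (M ⊓ A)) ⧸ Mb) := by
      haveI := hAbfin
      have hsurj2 : Function.Surjective
          (fun a : ↥Ab => (QuotientGroup.mk (a : Γ ⧸ (M ⊓ A)) : (Γ ⧸ (M ⊓ A)) ⧸ Mb)) := by
        intro q
        obtain ⟨g, rfl⟩ := QuotientGroup.mk_surjective q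
        have hg : g ∈ ((Ab : Set (Γ ⧸ (M ⊓ A))) * (Mb : Set (Γ ⧸ (M ⊓ A)))) := by
          rw [← Subgroup.normal_mul Ab Mb, sup_comm, hsupb]; simp
        obtain ⟨a, ha, m, hm, rfl⟩ := hg
        refine ⟨⟨a, ha⟩, ?_⟩
        show (QuotientGroup.mk a : (Γ ⧸ (M ⊓ A)) ⧸ Mb) = QuotientGroup.mk (a * m)
        rw [QuotientGroup.eq]
        simpa using hm
      exact Finite.of_surjective _ hsurj2
    haveI := hQfin
    have hne : Mb.index ≠ 0 := Subgroup.index_ne_zero_of_finite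
    rw [hMidx, h0] at hne
    exact hne rfl

lemma maximal_iff_prodense (hfg : Group.FG Γ) (hinf : Infinite Γ) (hq : QuotientsMF Γ) :
    (∃ M : Subgroup Γ, IsCoatom M ∧ M.index = 0) ↔
      ∃ H : Subgroup Γ, H ≠ ⊤ ∧ Prodense H := by
  constructor
  · rintro ⟨M, hM, h0⟩
    refine ⟨M, hM.1, fun N hNn hNbot => ?_⟩
    by_cases hNM : N ≤ M
    · exfalso
      haveI := hNn
      have hmf := hq N hNbot
      obtain ⟨hco, hidx⟩ := coatom_map_quotient N hM hNM
      exact hmf _ hco (hidx.trans h0)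
    · exact hM.2 _ (left_lt_sup.mpr hNM)
  · rintro ⟨H, hHne, hHpro⟩
    obtain ⟨M, hMco, hHM⟩ := exists_coatom_of_fg hfg hHne
    refine ⟨M, hMco, ?_⟩
    by_contra h0
    haveI : M.FiniteIndex := ⟨h0⟩
    have hMpro : Prodense M := fun N hn hb =>
      top_unique (by rw [← hHpro N hn hb]; exact sup_le_sup_right hHM N)
    rcases eq_or_ne M.normalCore ⊥ with hcore | hcore
    · have hker : (MulAction.toPermHom Γ (Γ ⧸ M)).ker = ⊥ := by
        rw [← Subgroup.normalCore_eq_ker, hcore]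
      have hinj : Function.Injective (MulAction.toPermHom Γ (Γ ⧸ M)) :=
        (MulAction.toPermHom Γ (Γ ⧸ M)).ker_eq_bot_iff.mp hker
      haveI : Finite Γ := Finite.of_injective _ hinj
      exact not_finite Γ
    · have hsup := hMpro M.normalCore M.normalCore_normal hcore
      rw [sup_of_le_left M.normalCore_le] at hsup
      exact hMco.1 hsup

end GroupLemmas

section TreeLemmas

open Pointwise

variable {A : ℕ → Type}

lemma perm_apply_inv_self {α : Type*} (g : Perm α) (x : α) : g (g⁻¹ x) = x :=
  (eq_symm_apply g).mp rfl

lemma perm_inv_apply_self {α : Type*} (g : Perm α) (x : α) : g⁻¹ (g x) = x :=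
  Perm.inv_eq_iff_eq.mpr rfl

lemma vertex_ext {v w : Vertex A} (h : v.1 = w.1)
    (h2 : ∀ i : Fin v.1, v.2 i = w.2 (Fin.cast h i)) : v = w := by
  obtain ⟨n, f⟩ := v
  obtain ⟨m, g⟩ := w
  dsimp at h
  subst h
  exact congrArg (Sigma.mk n) (funext fun i => h2 i)

lemma eq_of_isPref_of_level_le {v w : Vertex A} (h : IsPref A v w) (hl : w.1 ≤ v.1) :
    v = w := by
  obtain ⟨hle, hp⟩ := h
  have hEq : v.1 = w.1 := le_antisymm hle hl
  refine vertex_ext hEq fun i => ?_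
  rw [hp i]
  exact rfl

lemma eq_of_pref_pref {v w x : Vertex A} (h1 : IsPref A v x) (h2 : IsPref A w x)
    (hl : v.1 = w.1) : v = w := by
  obtain ⟨hle1, hp1⟩ := h1
  obtain ⟨hle2, hp2⟩ := h2
  refine vertex_ext hl fun i => ?_
  rw [hp1 i, hp2 (Fin.cast hl i)]
  exact rfl

/-- The prefixes of a vertex of level `m` are in bijection with `Fin (m+1)`. -/
noncomputable def prefEquiv (v : Vertex A) : {w : Vertex A // IsPref A w v} ≃ Fin (v.1 + 1) where
  toFun w := ⟨w.1.1, Nat.lt_succ_of_le w.2.choose⟩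
  invFun k := ⟨⟨k.1, fun i => v.2 (Fin.castLE (Nat.lt_succ_iff.mp k.2) i)⟩,
    ⟨Nat.lt_succ_iff.mp k.2, fun i => rfl⟩⟩
  left_inv := by
    rintro ⟨w, hw⟩
    apply Subtype.ext
    symm
    exact vertex_ext rfl fun i => hw.choose_spec i
  right_inv k := by apply Fin.ext; rfl

lemma level_card (v : Vertex A) : Nat.card {w : Vertex A // IsPref A w v} = v.1 + 1 := by
  rw [Nat.card_congr (prefEquiv v), Nat.card_eq_fintype_card, Fintype.card_fin]

lemma level_preserved {g : Perm (Vertex A)} (hg : g ∈ treeAut A) (v : Vertex A) :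
    (g v).1 = v.1 := by
  have e : {w : Vertex A // IsPref A w v} ≃ {w : Vertex A // IsPref A w (g v)} :=
    { toFun := fun w => ⟨g w.1, (hg w.1 v).mp w.2⟩
      invFun := fun w => ⟨g⁻¹ w.1, by
        have h2 := (hg (g⁻¹ w.1) v).mpr
        apply h2
        have h3 := w.2
        rwa [← perm_apply_inv_self g w.1] at h3⟩
      left_inv := fun w => Subtype.ext (perm_inv_apply_self g w.1)
      right_inv := fun w => Subtype.ext (perm_apply_inv_self g w.1) }
  have hc := Nat.card_congr e
  rw [level_card, level_card] at hc
  omega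

variable {G : Subgroup (Perm (Vertex A))}

lemma rist_fixes (hGA : G ≤ treeAut A) {v : Vertex A} {g : Perm (Vertex A)}
    (hg : g ∈ rist A G v) : g v = v := by
  by_cases h : IsPref A v (g v)
  · have hl : (g v).1 = v.1 := level_preserved (hGA hg.1) v
    exact (eq_of_isPref_of_level_le h hl.le).symm
  · exact g.injective (hg.2 (g v) h)

lemma rist_pref (hGA : G ≤ treeAut A) {v u : Vertex A} {g : Perm (Vertex A)}
    (hg : g ∈ rist A G v) (h : IsPref A v u) : IsPref A v (g u) := by
  have h2 := (hGA hg.1 v u).mp h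
  rwa [rist_fixes hGA hg] at h2

lemma rist_commute (hGA : G ≤ treeAut A) {v w : Vertex A} (hne : v ≠ w) (hl : v.1 = w.1)
    {a b : Perm (Vertex A)} (ha : a ∈ rist A G v) (hb : b ∈ rist A G w) : a * b = b * a := by
  apply Equiv.ext
  intro u
  simp only [Perm.mul_apply]
  by_cases h1 : IsPref A v u
  · have h2 : ¬ IsPref A w u := fun h2 => hne (eq_of_pref_pref h1 h2 hl)
    have h3 : ¬ IsPref A w (a u) := fun h3 => hne (eq_of_pref_pref (rist_pref hGA ha h1) h3 hl)
    rw [hb.2 u h2, hb.2 (a u) h3]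
  · by_cases h2 : IsPref A w u
    · have h3 : ¬ IsPref A v (b u) := fun h3 => hne (eq_of_pref_pref h3 (rist_pref hGA hb h2) hl)
      rw [ha.2 (b u) h3, ha.2 u h1]
    · rw [hb.2 u h2, ha.2 u h1, hb.2 u h2]

lemma rist_conj (hGA : G ≤ treeAut A) {g : Perm (Vertex A)} (hg : g ∈ G) {v : Vertex A}
    {a : Perm (Vertex A)} (ha : a ∈ rist A G v) : g * a * g⁻¹ ∈ rist A G (g v) := by
  refine ⟨G.mul_mem (G.mul_mem hg ha.1) (G.inv_mem hg), fun w hw => ?_⟩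
  have hnp : ¬ IsPref A v (g⁻¹ w) := by
    intro h
    apply hw
    have h2 := (hGA hg v (g⁻¹ w)).mp h
    rwa [perm_apply_inv_self g] at h2
  simp only [Perm.mul_apply]
  rw [ha.2 _ hnp, perm_apply_inv_self g]

/-- Vertices of level `n` are in bijection with tuples. -/
def levelEquiv (n : ℕ) : {w : Vertex A // w.1 = n} ≃ (∀ i : Fin n, A i) where
  toFun w i := w.1.2 (Fin.cast w.2.symm i)
  invFun f := ⟨⟨n, f⟩, rfl⟩
  left_inv w := Subtype.ext (vertex_ext w.2.symm fun i => rfl)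
  right_inv f := rfl

lemma infinite_of_sph_trans [∀ i, Fintype (A i)] (hcard : ∀ i, 2 ≤ Fintype.card (A i))
    (hGA : G ≤ treeAut A) (htrans : SphTrans A G) : Infinite ↥G := by
  rw [← not_finite_iff_infinite]
  intro hfin
  haveI := hfin
  haveI : ∀ i, Nonempty (A i) := fun i => Fintype.card_pos_iff.mp (by have := hcard i; omega)
  set n := Nat.card ↥G with hn
  let v0 : Vertex A := ⟨n, fun i => Classical.arbitrary (A i)⟩
  have hsurj : Function.Surjective (fun g : ↥G => (⟨(g : Perm (Vertex A)) v0,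
      level_preserved (hGA g.2) v0⟩ : {w : Vertex A // w.1 = n})) := by
    intro w
    obtain ⟨g, hgG, hgv⟩ := htrans v0 w.1 w.2.symm
    exact ⟨⟨g, hgG⟩, Subtype.ext hgv⟩
  have hle : Nat.card {w : Vertex A // w.1 = n} ≤ Nat.card ↥G :=
    Nat.card_le_card_of_surjective _ hsurj
  have hcardlevel : Nat.card {w : Vertex A // w.1 = n} = ∏ i : Fin n, Fintype.card (A i) := by
    rw [Nat.card_congr (levelEquiv n), Nat.card_eq_fintype_card, Fintype.card_pi]
  have h2n : 2 ^ n ≤ ∏ i : Fin n, Fintype.card (A i) := by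
    calc 2 ^ n = ∏ _i : Fin n, 2 := by simp
      _ ≤ ∏ i : Fin n, Fintype.card (A i) := Finset.prod_le_prod' (fun i _ => hcard i)
  have hlt := Nat.lt_two_pow_self (n := n)
  omega

lemma quotients_MF_of_branch (hG : IsBranch A G) (hfg : Group.FG ↥G) :
    QuotientsMF ↥G := by
  obtain ⟨⟨hGA, htrans, hrist⟩, hindex⟩ := hG
  intro N hNn hNbot
  set Nt : Subgroup (Perm (Vertex A)) := N.map G.subtype with hNt
  have hNtnorm : ∀ g ∈ G, ∀ x ∈ Nt, g * x * g⁻¹ ∈ Nt := by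
    rintro g hg x ⟨y, hy, rfl⟩
    exact ⟨⟨g, hg⟩ * y * ⟨g, hg⟩⁻¹, hNn.conj_mem y hy ⟨g, hg⟩, rfl⟩
  obtain ⟨x0, hx0N, hx0ne⟩ : ∃ x ∈ N, x ≠ 1 := by
    by_contra hc
    push_neg at hc
    exact hNbot ((Subgroup.eq_bot_iff_forall N).mpr hc)
  have hg0ne : (x0 : Perm (Vertex A)) ≠ 1 := fun h => hx0ne (Subtype.ext h)
  obtain ⟨u, hu⟩ : ∃ u, (x0 : Perm (Vertex A)) u ≠ u := by
    by_contra hc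
    push_neg at hc
    exact hg0ne (Equiv.ext hc)
  set g0 : Perm (Vertex A) := ↑x0 with hg0def
  have hg0G : g0 ∈ G := x0.2
  have hg0Nt : g0 ∈ Nt := ⟨x0, hx0N, rfl⟩
  set n := u.1 with hn
  have hulev : (g0 u).1 = u.1 := level_preserved (hGA hg0G) u
  have keyU : ∀ a ∈ rist A G u, ∀ b ∈ rist A G u, a * b * a⁻¹ * b⁻¹ ∈ Nt := by
    intro a ha b hb
    set c : Perm (Vertex A) := g0 * a⁻¹ * g0⁻¹ with hcdef
    have hcr : c ∈ rist A G (g0 u) := rist_conj hGA hg0G ((rist A G u).inv_mem ha)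
    have hcb : c * b = b * c := rist_commute hGA hu hulev hcr hb
    have ht : a * c ∈ Nt := by
      have h1 : a * g0 * a⁻¹ ∈ Nt := hNtnorm a ha.1 g0 hg0Nt
      have h2 : a * g0 * a⁻¹ * g0⁻¹ ∈ Nt := Nt.mul_mem h1 (Nt.inv_mem hg0Nt)
      have h3 : a * c = a * g0 * a⁻¹ * g0⁻¹ := by rw [hcdef]; group
      rwa [h3]
    have hs : (a * c) * (b * (a * c)⁻¹ * b⁻¹) ∈ Nt :=
      Nt.mul_mem ht (hNtnorm b hb.1 _ (Nt.inv_mem ht))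
    have heq : (a * c) * (b * (a * c)⁻¹ * b⁻¹) = a * b * a⁻¹ * b⁻¹ := by
      calc (a * c) * (b * (a * c)⁻¹ * b⁻¹) = a * (c * b) * c⁻¹ * a⁻¹ * b⁻¹ := by group
        _ = a * (b * c) * c⁻¹ * a⁻¹ * b⁻¹ := by rw [hcb]
        _ = a * b * a⁻¹ * b⁻¹ := by group
    rwa [heq] at hs
  have keyLevel : ∀ v : Vertex A, v.1 = n → ∀ w : Vertex A, w.1 = n →
      ∀ a ∈ rist A G v, ∀ b ∈ rist A G w, a * b * a⁻¹ * b⁻¹ ∈ Nt := by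
    intro v hv w hw a ha b hb
    by_cases hvw : v = w
    · subst hvw
      obtain ⟨h, hhG, hhu⟩ := htrans u v (by rw [hv, hn])
      have ha' : h⁻¹ * a * h ∈ rist A G u := by
        have h2 := rist_conj hGA (G.inv_mem hhG) ha
        rw [inv_inv] at h2
        have huv : h⁻¹ v = u := by rw [← hhu]; exact perm_inv_apply_self h u
        rwa [huv] at h2
      have hb' : h⁻¹ * b * h ∈ rist A G u := by
        have h2 := rist_conj hGA (G.inv_mem hhG) hb
        rw [inv_inv] at h2
        have huv : h⁻¹ v = u := by rw [← hhu]; exact perm_inv_apply_self h u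
        rwa [huv] at h2
      have hcomm := keyU _ ha' _ hb'
      have h4 := hNtnorm h hhG _ hcomm
      have heq : h * ((h⁻¹ * a * h) * (h⁻¹ * b * h) * (h⁻¹ * a * h)⁻¹ * (h⁻¹ * b * h)⁻¹) * h⁻¹
          = a * b * a⁻¹ * b⁻¹ := by group
      rwa [heq] at h4
    · have hcomm := rist_commute hGA hvw (by rw [hv, hw]) ha hb
      have heq : a * b * a⁻¹ * b⁻¹ = 1 := by rw [hcomm]; group
      rw [heq]; exact Nt.one_mem
  have keyAll : ∀ p ∈ ristLevel A G n, ∀ q ∈ ristLevel A G n,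
      p * q * p⁻¹ * q⁻¹ ∈ Nt := by
    have inner : ∀ v : Vertex A, v.1 = n → ∀ x ∈ rist A G v, ∀ q ∈ ristLevel A G n,
        x * q * x⁻¹ * q⁻¹ ∈ Nt := by
      intro v hv x hx q hq
      refine (Subgroup.iSup_induction (fun w : Vertex A => ⨆ (_ : w.1 = n), rist A G w)
        (C := fun q => q ∈ G ∧ x * q * x⁻¹ * q⁻¹ ∈ Nt) hq ?_ ?_ ?_).2
      · intro w y hy
        replace hy : y ∈ ⨆ (_ : w.1 = n), rist A G w := hy
        by_cases hw : w.1 = n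
        · rw [iSup_pos hw] at hy
          exact ⟨hy.1, keyLevel v hv w hw x hx y hy⟩
        · rw [iSup_neg hw] at hy
          rw [Subgroup.mem_bot] at hy
          subst hy
          refine ⟨G.one_mem, ?_⟩
          have h5 : x * 1 * x⁻¹ * 1⁻¹ = 1 := by group
          rw [h5]; exact Nt.one_mem
      · refine ⟨G.one_mem, ?_⟩
        have h5 : x * 1 * x⁻¹ * 1⁻¹ = 1 := by group
        rw [h5]; exact Nt.one_mem
      · intro q1 q2 h1 h2
        refine ⟨G.mul_mem h1.1 h2.1, ?_⟩
        have heq : x * (q1 * q2) * x⁻¹ * (q1 * q2)⁻¹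
            = (x * q1 * x⁻¹ * q1⁻¹) * (q1 * (x * q2 * x⁻¹ * q2⁻¹) * q1⁻¹) := by group
        rw [heq]
        exact Nt.mul_mem h1.2 (hNtnorm q1 h1.1 _ h2.2)
    intro p hp q hq
    refine (Subgroup.iSup_induction (fun w : Vertex A => ⨆ (_ : w.1 = n), rist A G w)
      (C := fun p => p ∈ G ∧ p * q * p⁻¹ * q⁻¹ ∈ Nt) hp ?_ ?_ ?_).2
    · intro w y hy
      replace hy : y ∈ ⨆ (_ : w.1 = n), rist A G w := hy
      by_cases hw : w.1 = n
      · rw [iSup_pos hw] at hy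
        exact ⟨hy.1, inner w hw y hy q hq⟩
      · rw [iSup_neg hw] at hy
        rw [Subgroup.mem_bot] at hy
        subst hy
        refine ⟨G.one_mem, ?_⟩
        have h5 : (1 : Perm (Vertex A)) * q * 1⁻¹ * q⁻¹ = 1 := by group
        rw [h5]; exact Nt.one_mem
    · refine ⟨G.one_mem, ?_⟩
      have h5 : (1 : Perm (Vertex A)) * q * 1⁻¹ * q⁻¹ = 1 := by group
      rw [h5]; exact Nt.one_mem
    · intro p1 p2 h1 h2
      refine ⟨G.mul_mem h1.1 h2.1, ?_⟩
      have heq : (p1 * p2) * q * (p1 * p2)⁻¹ * q⁻¹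
          = (p1 * (p2 * q * p2⁻¹ * q⁻¹) * p1⁻¹) * (p1 * q * p1⁻¹ * q⁻¹) := by group
      rw [heq]
      exact Nt.mul_mem (hNtnorm p1 h1.1 _ h2.2) h1.2
  set S : Subgroup (↥G ⧸ N) :=
    ((ristLevel A G n).subgroupOf G).map (QuotientGroup.mk' N) with hS
  have hScomm : ∀ x ∈ S, ∀ y ∈ S, x * y = y * x := by
    rintro _ ⟨x, hx, rfl⟩ _ ⟨y, hy, rfl⟩
    have hcomm := keyAll _ (Subgroup.mem_subgroupOf.mp hx) _ (Subgroup.mem_subgroupOf.mp hy)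
    have hmem : x * y * x⁻¹ * y⁻¹ ∈ N := by
      obtain ⟨z, hz, hze⟩ := hcomm
      have hzz : z = x * y * x⁻¹ * y⁻¹ := Subtype.ext hze
      rwa [hzz] at hz
    open scoped commutatorElement in
    have h1 : ⁅QuotientGroup.mk' N x, QuotientGroup.mk' N y⁆ = 1 := by
      rw [commutatorElement_def, ← map_inv, ← map_inv, ← map_mul, ← map_mul, ← map_mul]
      exact (QuotientGroup.eq_one_iff _).mpr hmem
    exact commutatorElement_eq_one_iff_mul_comm.mp h1
  have hSidx : S.index ≠ 0 := by
    have hrel : ((ristLevel A G n).subgroupOf G).index ≠ 0 := hindex n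
    intro h0
    have hd := Subgroup.index_map_dvd ((ristLevel A G n).subgroupOf G)
      (QuotientGroup.mk'_surjective N)
    rw [h0] at hd
    exact hrel (zero_dvd_iff.mp hd)
  haveI : S.FiniteIndex := ⟨hSidx⟩
  have hcoreidx : S.normalCore.index ≠ 0 :=
    Subgroup.FiniteIndex.index_ne_zero (H := S.normalCore)
  have hcorecomm : ∀ x ∈ S.normalCore, ∀ y ∈ S.normalCore, x * y = y * x :=
    fun x hx y hy => hScomm x (S.normalCore_le hx) y (S.normalCore_le hy)
  haveI : Group.FG (↥G ⧸ N) := Group.fg_of_surjective (QuotientGroup.mk'_surjective N)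
  exact MF_of_fg_virtually_abelian inferInstance S.normalCore hcorecomm hcoreidx

end TreeLemmas


/-- A finitely generated branch group is infinite, all its
proper quotients lie in `𝓜𝓕`, and it admits a maximal subgroup of infinite index
if and only if it admits a proper prodense subgroup. -/
theorem branch_infinite_quotientsMF_and_maximal_iff_prodense
    (A : ℕ → Type) [∀ i, Fintype (A i)] (hcard : ∀ i, 2 ≤ Fintype.card (A i))
    (G : Subgroup (Perm (Vertex A))) (hG : IsBranch A G) (hfg : Group.FG ↥G) :
    Infinite ↥G ∧ QuotientsMF ↥G ∧
      ((∃ M : Subgroup ↥G, IsCoatom M ∧ M.index = 0) ↔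
        ∃ H : Subgroup ↥G, H ≠ ⊤ ∧ Prodense H) := by
  have hinf : Infinite ↥G := infinite_of_sph_trans hcard hG.1.1 hG.1.2.1
  have hqmf : QuotientsMF ↥G := quotients_MF_of_branch hG hfg
  exact ⟨hinf, hqmf, maximal_iff_prodense hfg hinf hqmf⟩

end PaperDefs
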